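/- arXiv:2009.05807 — 9 statements merged into one kernel-verified Lean document; each statement's English description precedes it below -/
import Mathlib

section
/- Let R be an associative unital ℂ-algebra, N ≥ 1, h ∈ ℂ, and let (l_i^j) and (∂_i^j), i,j ∈ {1,…,N}, be families of elements of R satisfying the permutation relations ∂_i^j · l_k^s = l_k^s · ∂_i^j + δ_i^s δ_k^j · 1 + h δ_k^j ∂_i^s for all indices i,j,k,s. Then for all indices i,j,k,s,p,q the element G = l_k^s l_p^q − l_p^q l_k^s − h(δ_p^s l_k^q − δ_k^q l_p^s) commutes with ∂_i^j, i.e. ∂_i^j · G = G · ∂_i^j. (Matrix form: D₁(L₂L₃ − L₃L₂ − hL₂P₂₃ + hP₂₃L₂) = (L₂L₃ − L₃L₂ − hL₂P₂₃ + hP₂₃L₂)D₁, so the permutation map is compatible with the defining relations of U(gl(N)_h) and of the commutative algebra generated by the ∂_i^j.) -/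
/-!
The commutator bracket `⁅∂_i^j, ·⁆` is a derivation of `R`.
The permutation relations say `⁅∂_i^j, l_k^s⁆ = δ_i^s δ_k^j + h δ_k^j ∂_i^s`; since the scalar part
is central, the Leibniz rule gives
`⁅∂_i^j, ⁅l_k^s, l_p^q⁆⁆ = h (δ_k^j ⁅∂_i^s, l_p^q⁆ − δ_p^j ⁅∂_i^q, l_k^s⁆)`.
Both `δ_k^j ⁅∂_i^s, l_p^q⁆` and `δ_p^s ⁅∂_i^j, l_k^q⁆` equal `δ_k^j δ_p^s (δ_i^q + h ∂_i^q)`, so this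
is exactly `h ⁅∂_i^j, δ_p^s l_k^q − δ_k^q l_p^s⁆`, and `⁅∂_i^j, G⁆ = 0`.
-/

section

attribute [local instance] LieRing.ofAssociativeRing

variable {R ι : Type*} [Ring R]

theorem ite_one_lie (c : Prop) [Decidable c] (x : R) : ⁅(if c then 1 else 0 : R), x⁆ = 0 := by
  split_ifs <;> simp [Ring.lie_def]

variable [Algebra ℂ R] [DecidableEq ι]

def PermutationRelations (h : ℂ) (l D : ι → ι → R) : Prop :=
  ∀ i j k s, ⁅D i j, l k s⁆ = (if i = s ∧ k = j then 1 else 0) + h • (if k = j then D i s else 0)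

def glRelator (h : ℂ) (l : ι → ι → R) (k s p q : ι) : R :=
  ⁅l k s, l p q⁆ - h • ((if p = s then l k q else 0) - (if k = q then l p s else 0))

variable {h : ℂ} {l D : ι → ι → R}

theorem permutationRelations_of_mul_eq
    (perm : ∀ i j k s, D i j * l k s =
      l k s * D i j + (if i = s ∧ k = j then (1 : R) else 0) + h • (if k = j then D i s else 0)) :
    PermutationRelations h l D := by
  intro i j k s
  rw [Ring.lie_def, perm, add_assoc, add_sub_cancel_left]

namespace PermutationRelations

variable (hp : PermutationRelations h l D)
include hp

theorem lie_lie (i j k s p q : ι) :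
    ⁅D i j, ⁅l k s, l p q⁆⁆ =
      h • ((if k = j then ⁅D i s, l p q⁆ else 0) - (if p = j then ⁅D i q, l k s⁆ else 0)) := by
  rw [leibniz_lie, hp, ← lie_skew (l k s), hp, add_lie, add_lie, smul_lie, smul_lie, ite_one_lie,
    ite_one_lie, zero_add, zero_add, apply_ite (⁅·, l p q⁆), apply_ite (⁅·, l k s⁆), zero_lie, zero_lie, smul_sub, sub_eq_add_neg]

theorem ite_lie_eq_ite_lie (i j k s p q : ι) :
    (if k = j then ⁅D i s, l p q⁆ else 0) = (if p = s then ⁅D i j, l k q⁆ else 0) := by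
  rw [hp, hp]
  split_ifs <;> simp_all

theorem lie_glRelator (i j k s p q : ι) : ⁅D i j, glRelator h l k s p q⁆ = 0 := by
  rw [glRelator, lie_sub, hp.lie_lie, lie_smul, lie_sub, hp.ite_lie_eq_ite_lie,
    hp.ite_lie_eq_ite_lie i j p q k s, apply_ite (⁅D i j, ·⁆), apply_ite (⁅D i j, ·⁆), lie_zero,
    sub_self]

end PermutationRelations

end

theorem quantum_double_compatibility_general
    {R : Type*} [Ring R] [Algebra ℂ R] (N : ℕ) (h : ℂ)
    (l D : Fin N → Fin N → R)
    (perm : ∀ i j k s : Fin N,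
      D i j * l k s =
        l k s * D i j + (if i = s ∧ k = j then (1 : R) else 0)
          + h • (if k = j then D i s else 0)) :
    ∀ i j k s p q : Fin N,
      D i j * (l k s * l p q - l p q * l k s
          - h • ((if p = s then l k q else 0) - (if k = q then l p s else 0)))
        = (l k s * l p q - l p q * l k s
          - h • ((if p = s then l k q else 0) - (if k = q then l p s else 0))) * D i j :=
  fun i j k s p q =>
    commute_iff_lie_eq.mpr ((permutationRelations_of_mul_eq perm).lie_glRelator i j k s p q)

/-- If the families `l` and `∂` satisfy the permutation relations
`∂_i^j · l_k^s = l_k^s · ∂_i^j + δ_i^s δ_k^j · 1 + h δ_k^j ∂_i^s`, then every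
defining-relation element `G = l_k^s l_p^q − l_p^q l_k^s − h(δ_p^s l_k^q − δ_k^q l_p^s)`
of `U(gl(N)_h)` commutes with every `∂_i^j`. -/
theorem quantum_double_compatibility
    {R : Type*} [Ring R] [Algebra ℂ R] (N : ℕ) (hN : 1 ≤ N) (h : ℂ)
    (l D : Fin N → Fin N → R)
    (perm : ∀ i j k s : Fin N,
      D i j * l k s =
        l k s * D i j + (if i = s ∧ k = j then (1 : R) else 0)
          + h • (if k = j then D i s else 0)) :
    ∀ i j k s p q : Fin N,
      D i j * (l k s * l p q - l p q * l k s
          - h • ((if p = s then l k q else 0) - (if k = q then l p s else 0)))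
        = (l k s * l p q - l p q * l k s
          - h • ((if p = s then l k q else 0) - (if k = q then l p s else 0))) * D i j :=
  quantum_double_compatibility_general N h l D perm
end

section
/- Let R be an associative unital ℂ-algebra containing elements t, x, y, z satisfying the u(2)_h relations: xy − yx = 2iħz, yz − zy = 2iħx, zx − xz = 2iħy, and t commutes with x, y, z, where ħ ∈ ℂ. In the ring of 2×2 matrices over R define 𝒟(t) = (t + iħ)·I, 𝒟(x) = [[x, −ħ],[−ħ, x]], 𝒟(y) = [[y, −iħ],[iħ, y]], 𝒟(z) = [[z − ħ, 0],[0, z + ħ]]. Then these matrices satisfy the same relations: 𝒟(x)𝒟(y) − 𝒟(y)𝒟(x) = 2iħ𝒟(z), 𝒟(y)𝒟(z) − 𝒟(z)𝒟(y) = 2iħ𝒟(x), 𝒟(z)𝒟(x) − 𝒟(x)𝒟(z) = 2iħ𝒟(y), and 𝒟(t) commutes with 𝒟(x), 𝒟(y), 𝒟(z). Hence 𝒟 extends to an algebra homomorphism from U(u(2)_h) to the 2×2 matrices over R. -/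
/-!
Write `𝒟(g) = g • I + ρ(g)`, where `ρ` sends `t, x, y, z` to the constant complex matrices
`iħ I, −ħσ₁, ħσ₂, −ħσ₃` (`σⱼ` the Pauli matrices). The Pauli relations `[σ₁, σ₂] = 2iσ₃` (and
cyclically) make `ρ` a representation of `u(2)_h` on its own. Since scalars from `ℂ` are central in
`R`, every diagonal matrix `r • I` commutes with every constant matrix, so the bracket of two such
sums is the sum of the brackets, and the relations of `𝒟` are those of `g ↦ g • I` plus those of `ρ`.
-/

open Matrix

theorem lie_add_add_of_commute {S : Type*} [Ring S] {a b p q : S}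
    (haq : Commute a q) (hpb : Commute p b) :
    ⁅a + p, b + q⁆ = ⁅a, b⁆ + ⁅p, q⁆ := by
  simp only [Ring.lie_def, add_mul, mul_add, haq.eq, hpb.eq]
  abel

namespace Matrix

variable {n A R : Type*} [Fintype n] [DecidableEq n] [CommRing A] [Ring R] [Algebra A R]

theorem scalar_smul (c : A) (r : R) : scalar n (c • r) = c • scalar n r :=
  diagonal_smul c fun _ => r

theorem commute_scalar_mapMatrix_ofId (r : R) (M : Matrix n n A) :
    Commute (scalar n r) ((Algebra.ofId A R).mapMatrix M) := by
  ext i j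
  simp [scalar_apply, Algebra.commutes]

theorem lie_scalar_add_mapMatrix_ofId {a b e : R} {P Q E : Matrix n n A} {c : A}
    (hab : ⁅a, b⁆ = c • e) (hPQ : ⁅P, Q⁆ = c • E) :
    ⁅scalar n a + (Algebra.ofId A R).mapMatrix P, scalar n b + (Algebra.ofId A R).mapMatrix Q⁆ =
      c • (scalar n e + (Algebra.ofId A R).mapMatrix E) := by
  rw [lie_add_add_of_commute (commute_scalar_mapMatrix_ofId a Q)
    (commute_scalar_mapMatrix_ofId b P).symm]
  simp only [Ring.lie_def] at hab hPQ ⊢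
  simp only [← map_mul, ← map_sub, hab, hPQ, map_smul, scalar_smul, smul_add]

theorem commute_scalar_add_mapMatrix_ofId {a b : R} {P Q : Matrix n n A}
    (hab : Commute a b) (hPQ : Commute P Q) :
    Commute (scalar n a + (Algebra.ofId A R).mapMatrix P)
      (scalar n b + (Algebra.ofId A R).mapMatrix Q) :=
  ((hab.map _).add_right (commute_scalar_mapMatrix_ofId a Q)).add_left
    ((commute_scalar_mapMatrix_ofId b P).symm.add_right (hPQ.map _))

end Matrix

section Pauli

open Complex

variable (hb : ℂ)

theorem lie_pauli_xy :
    ⁅!![0, -hb; -hb, 0], !![0, -(I * hb); I * hb, 0]⁆ = (2 * I * hb) • !![-hb, 0; 0, hb] := by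
  ext i j; fin_cases i <;> fin_cases j <;> simp [Ring.lie_def] <;> ring

theorem lie_pauli_yz :
    ⁅!![0, -(I * hb); I * hb, 0], !![-hb, 0; 0, hb]⁆ = (2 * I * hb) • !![0, -hb; -hb, 0] := by
  ext i j; fin_cases i <;> fin_cases j <;> simp [Ring.lie_def] <;> ring

theorem lie_pauli_zx :
    ⁅!![-hb, 0; 0, hb], !![0, -hb; -hb, 0]⁆ = (2 * I * hb) • !![0, -(I * hb); I * hb, 0] := by
  ext i j; fin_cases i <;> fin_cases j <;> simp [Ring.lie_def] <;> ring_nf <;> simp [I_sq]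

end Pauli

/-- if `t, x, y, z ∈ R` satisfy the `u(2)_h` relations (`h = 2iħ`, here `ħ = hb`),
then the 2×2 matrices `𝒟(t) = (t + iħ)I`, `𝒟(x) = [[x, −ħ],[−ħ, x]]`,
`𝒟(y) = [[y, −iħ],[iħ, y]]`, `𝒟(z) = [[z − ħ, 0],[0, z + ħ]]` satisfy the same relations,
hence `𝒟` extends to an algebra homomorphism `U(u(2)_h) → Mat₂(R)`. -/
theorem D_matrices_satisfy_u2_relations
    {R : Type*} [Ring R] [Algebra ℂ R] (hb : ℂ) (t x y z : R)
    (hxy : x * y - y * x = (2 * Complex.I * hb) • z)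
    (hyz : y * z - z * y = (2 * Complex.I * hb) • x)
    (hzx : z * x - x * z = (2 * Complex.I * hb) • y)
    (htx : t * x = x * t) (hty : t * y = y * t) (htz : t * z = z * t) :
    let Dt : Matrix (Fin 2) (Fin 2) R := (t + (Complex.I * hb) • (1 : R)) • (1 : Matrix (Fin 2) (Fin 2) R)
    let Dx : Matrix (Fin 2) (Fin 2) R := !![x, (-hb) • (1 : R); (-hb) • (1 : R), x]
    let Dy : Matrix (Fin 2) (Fin 2) R := !![y, (-(Complex.I * hb)) • (1 : R); (Complex.I * hb) • (1 : R), y]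
    let Dz : Matrix (Fin 2) (Fin 2) R := !![z - hb • (1 : R), 0; 0, z + hb • (1 : R)]
    Dx * Dy - Dy * Dx = (2 * Complex.I * hb) • Dz ∧
    Dy * Dz - Dz * Dy = (2 * Complex.I * hb) • Dx ∧
    Dz * Dx - Dx * Dz = (2 * Complex.I * hb) • Dy ∧
    Dt * Dx = Dx * Dt ∧ Dt * Dy = Dy * Dt ∧ Dt * Dz = Dz * Dt := by
  intro Dt Dx Dy Dz
  set φ := (Algebra.ofId ℂ R).mapMatrix (m := Fin 2)
  have hDt : Dt = scalar (Fin 2) t + φ ((Complex.I * hb) • 1) := by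
    rw [map_smul, map_one]
    ext i j; fin_cases i <;> fin_cases j <;> simp [Dt]
  have hDx : Dx = scalar (Fin 2) x + φ !![0, -hb; -hb, 0] := by
    ext i j; fin_cases i <;> fin_cases j <;> simp [Dx, φ, Algebra.smul_def]
  have hDy : Dy = scalar (Fin 2) y + φ !![0, -(Complex.I * hb); Complex.I * hb, 0] := by
    ext i j; fin_cases i <;> fin_cases j <;> simp [Dy, φ, Algebra.smul_def]
  have hDz : Dz = scalar (Fin 2) z + φ !![-hb, 0; 0, hb] := by
    ext i j; fin_cases i <;> fin_cases j <;> simp [Dz, φ, Algebra.smul_def, sub_eq_add_neg]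
  have hcentral (P : Matrix (Fin 2) (Fin 2) ℂ) : Commute ((Complex.I * hb) • 1) P :=
    (Commute.one_left P).smul_left _
  simp only [← Ring.lie_def, hDt, hDx, hDy, hDz]
  exact ⟨lie_scalar_add_mapMatrix_ofId ((Ring.lie_def x y).trans hxy) (lie_pauli_xy hb),
    lie_scalar_add_mapMatrix_ofId ((Ring.lie_def y z).trans hyz) (lie_pauli_yz hb),
    lie_scalar_add_mapMatrix_ofId ((Ring.lie_def z x).trans hzx) (lie_pauli_zx hb),
    (commute_scalar_add_mapMatrix_ofId htx (hcentral _)).eq,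
    (commute_scalar_add_mapMatrix_ofId hty (hcentral _)).eq,
    (commute_scalar_add_mapMatrix_ofId htz (hcentral _)).eq⟩
end

section
/- Let R be an associative unital ℂ-algebra containing elements t, x, y, z satisfying the u(2)_h relations: xy − yx = 2iħz, yz − zy = 2iħx, zx − xz = 2iħy, and t commutes with x, y, z, where ħ ∈ ℂ. Then the 2×2 matrix L = [[t − iz, −ix − y],[−ix + y, t + iz]] over R satisfies the Cayley–Hamilton identity L² − (2t + 2iħ)L + (t² + x² + y² + z² + 2iħt)·I = 0. -/
/-!
Write `L = t • 1 + A` with `A = -i (x σ₁ + y σ₂ + z σ₃)` in terms of the Pauli matrices.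
The product rule `σ_a σ_b = δ_ab + i ε_abc σ_c` and the commutation relations give
`A² = h A - (x² + y² + z²) • 1`, and since `t` commutes with the entries of `A`, shifting this
quadratic relation by `t • 1` yields the stated one for `L`.
-/

open Complex Matrix

theorem add_mul_self_sub_mul_add_eq_zero_of_commute {S : Type*} [Ring S] {a b s c : S}
    (hab : Commute a b) (hb : b * b = s * b - c) :
    (a + b) * (a + b) - (2 * a + s) * (a + b) + (a * a + c + s * a) = 0 := by
  calc _ = (b * a - a * b) + (b * b - (s * b - c)) := by noncomm_ring
    _ = 0 := by rw [hab.eq, hb]; noncomm_ring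

theorem Matrix.commute_scalar_of_forall_commute {n R : Type*} [Fintype n] [DecidableEq n]
    [Semiring R] {r : R} {M : Matrix n n R} (h : ∀ i j, Commute r (M i j)) :
    Commute (scalar n r) M :=
  scalar_commute_iff.2 <| ext fun i j => (h i j).eq

section

variable {R : Type*} [Ring R] [Algebra ℂ R]

/-- `-i (x σ₁ + y σ₂ + z σ₃)`, the traceless part of `L`. -/
def su2Matrix (x y z : R) : Matrix (Fin 2) (Fin 2) R :=
  !![-(I • z), -(I • x) - y; -(I • x) + y, I • z]

theorem su2Matrix_mul_self {c : ℂ} {x y z : R}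
    (hxy : x * y - y * x = c • z) (hyz : y * z - z * y = c • x)
    (hzx : z * x - x * z = c • y) :
    su2Matrix x y z * su2Matrix x y z
      = c • su2Matrix x y z - scalar (Fin 2) (x * x + y * y + z * z) := by
  -- Reordering every monomial to the order `y, x, z` leaves only linearly independent
  -- monomials, so it remains to compare their coefficients in `ℂ`.
  have hxy' : x * y = y * x + c • z := sub_eq_iff_eq_add'.mp hxy
  have hzy' : z * y = y * z - c • x := by rw [← hyz]; abel
  have hzx' : z * x = x * z + c • y := sub_eq_iff_eq_add'.mp hzx
  ext i j
  fin_cases i <;> fin_cases j <;>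
    simp only [su2Matrix, Fin.zero_eta, Fin.mk_one, Fin.isValue, mul_apply, Fin.sum_univ_two,
      of_apply, cons_val', cons_val_zero, cons_val_one, cons_val_fin_one, Matrix.sub_apply,
      Matrix.smul_apply, scalar_apply, diagonal_apply_eq, diagonal_apply_ne, zero_ne_one,
      one_ne_zero, ne_eq, not_false_eq_true, mul_add, add_mul, mul_sub, sub_mul, neg_mul, mul_neg,
      smul_mul_assoc, mul_smul_comm, hxy', hzy', hzx'] <;>
    match_scalars <;> grind [I_sq]

theorem commute_scalar_su2Matrix {t x y z : R} (hx : Commute t x) (hy : Commute t y)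
    (hz : Commute t z) : Commute (scalar (Fin 2) t) (su2Matrix x y z) := by
  refine Matrix.commute_scalar_of_forall_commute fun i j => ?_
  fin_cases i <;> fin_cases j
  · exact (hz.smul_right I).neg_right
  · exact (hx.smul_right I).neg_right.sub_right hy
  · exact (hx.smul_right I).neg_right.add_right hy
  · exact hz.smul_right I

end

/-- if `t, x, y, z ∈ R` satisfy the `u(2)_h` relations (`h = 2iħ`, here `ħ = hb`),
then the generating matrix `L = [[t − iz, −ix − y],[−ix + y, t + iz]]` satisfies the
Cayley–Hamilton identity `L² − (2t + 2iħ)L + (t² + x² + y² + z² + 2iħt)I = 0`. -/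
theorem CayleyHamilton_for_L
    {R : Type*} [Ring R] [Algebra ℂ R] (hb : ℂ) (t x y z : R)
    (hxy : x * y - y * x = (2 * Complex.I * hb) • z)
    (hyz : y * z - z * y = (2 * Complex.I * hb) • x)
    (hzx : z * x - x * z = (2 * Complex.I * hb) • y)
    (htx : t * x = x * t) (hty : t * y = y * t) (htz : t * z = z * t) :
    let L : Matrix (Fin 2) (Fin 2) R :=
      !![t - Complex.I • z, -(Complex.I • x) - y;
         -(Complex.I • x) + y, t + Complex.I • z]
    L * L - ((2 : ℂ) • t + (2 * Complex.I * hb) • (1 : R)) • L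
      + (t * t + x * x + y * y + z * z + (2 * Complex.I * hb) • t)
          • (1 : Matrix (Fin 2) (Fin 2) R) = 0 := by
  intro L
  have hL : L = scalar (Fin 2) t + su2Matrix x y z := by
    ext i j; fin_cases i <;> fin_cases j <;> simp [L, su2Matrix, sub_eq_add_neg, add_comm]
  have hsq := su2Matrix_mul_self hxy hyz hzx
  rw [← smul_one_smul R, smul_eq_diagonal_mul, ← scalar_apply] at hsq
  have key :=
    add_mul_self_sub_mul_add_eq_zero_of_commute (commute_scalar_su2Matrix htx hty htz) hsq
  rw [← hL] at key
  rw [smul_eq_diagonal_mul, smul_one_eq_diagonal, ← scalar_apply, ← scalar_apply]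
  convert key using 2
  · simp [two_smul, two_mul]
  · simp [add_assoc]
end

section
/- Let R be an associative unital ℂ-algebra containing elements x, y, z satisfying xy − yx = 2iħz, yz − zy = 2iħx, zx − xz = 2iħy, where ħ ∈ ℂ. Let A, B, C be the 4×4 complex matrices A = [[0,1,0,0],[−1,0,0,0],[0,0,0,−1],[0,0,1,0]], B = [[0,0,1,0],[0,0,0,1],[−1,0,0,0],[0,−1,0,0]], C = [[0,0,0,1],[0,0,−1,0],[0,1,0,0],[−1,0,0,0]], and set M = xA + yB + zC in the 4×4 matrices over R. Then M satisfies the Cayley–Hamilton identity M² − 2iħM + (x² + y² + z²)·I = 0. -/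
/-!
The matrices `A, B, C` have central entries (`0, ±1`) and satisfy the quaternion relations, so
expanding `M²` gives `-(x² + y² + z²) I` plus the commutator part `[y, z] A + [z, x] B + [x, y] C`,
which the `su(2)_h` relations turn into `2iħ M`.
-/

/-- The 4×4 matrix `A` (with entries in any ring `R`). -/
def matA (R : Type*) [Ring R] : Matrix (Fin 4) (Fin 4) R :=
  !![0, 1, 0, 0; -1, 0, 0, 0; 0, 0, 0, -1; 0, 0, 1, 0]

/-- The 4×4 matrix `B` (with entries in any ring `R`). -/
def matB (R : Type*) [Ring R] : Matrix (Fin 4) (Fin 4) R :=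
  !![0, 0, 1, 0; 0, 0, 0, 1; -1, 0, 0, 0; 0, -1, 0, 0]

/-- The 4×4 matrix `C` (with entries in any ring `R`). -/
def matC (R : Type*) [Ring R] : Matrix (Fin 4) (Fin 4) R :=
  !![0, 0, 0, 1; 0, 0, -1, 0; 0, 1, 0, 0; -1, 0, 0, 0]

theorem Matrix.smul_mul_smul_of_commute {l m n α : Type*} [Fintype m] [NonUnitalSemiring α]
    (a b : α) (P : Matrix l m α) (Q : Matrix m n α) (hP : ∀ i k, Commute (P i k) b) :
    (a • P) * (b • Q) = (a * b) • (P * Q) := by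
  ext i j
  simp only [Matrix.mul_apply, Matrix.smul_apply, smul_eq_mul, Finset.mul_sum]
  refine Finset.sum_congr rfl fun k _ => ?_
  rw [mul_assoc, ← mul_assoc (P i k), (hP i k).eq, mul_assoc, mul_assoc]

section QuaternionRelations

variable {R : Type*} [Ring R]

theorem matA_apply_commute (b : R) (i j : Fin 4) : Commute (matA R i j) b := by
  fin_cases i <;> fin_cases j <;> simp [matA]

theorem matB_apply_commute (b : R) (i j : Fin 4) : Commute (matB R i j) b := by
  fin_cases i <;> fin_cases j <;> simp [matB]

theorem matC_apply_commute (b : R) (i j : Fin 4) : Commute (matC R i j) b := by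
  fin_cases i <;> fin_cases j <;> simp [matC]

theorem matA_mul_matA : matA R * matA R = -1 := by
  ext i j
  fin_cases i <;> fin_cases j <;> simp [matA, Matrix.mul_apply, Fin.sum_univ_four]

theorem matA_mul_matB : matA R * matB R = matC R := by
  ext i j
  fin_cases i <;> fin_cases j <;> simp [matA, matB, matC, Matrix.mul_apply, Fin.sum_univ_four]

theorem matB_mul_matA : matB R * matA R = -matC R := by
  ext i j
  fin_cases i <;> fin_cases j <;> simp [matA, matB, matC, Matrix.mul_apply, Fin.sum_univ_four]

theorem matB_mul_matB : matB R * matB R = -1 := by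
  ext i j
  fin_cases i <;> fin_cases j <;> simp [matB, Matrix.mul_apply, Fin.sum_univ_four]

theorem matC_mul_matC : matC R * matC R = -1 := by
  ext i j
  fin_cases i <;> fin_cases j <;> simp [matC, Matrix.mul_apply, Fin.sum_univ_four]

theorem matB_mul_matC : matB R * matC R = matA R := by
  ext i j
  fin_cases i <;> fin_cases j <;> simp [matA, matB, matC, Matrix.mul_apply, Fin.sum_univ_four]

theorem matC_mul_matB : matC R * matB R = -matA R := by
  ext i j
  fin_cases i <;> fin_cases j <;> simp [matA, matB, matC, Matrix.mul_apply, Fin.sum_univ_four]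

theorem matC_mul_matA : matC R * matA R = matB R := by
  ext i j
  fin_cases i <;> fin_cases j <;> simp [matA, matB, matC, Matrix.mul_apply, Fin.sum_univ_four]

theorem matA_mul_matC : matA R * matC R = -matB R := by
  ext i j
  fin_cases i <;> fin_cases j <;> simp [matA, matB, matC, Matrix.mul_apply, Fin.sum_univ_four]

theorem sq_smul_matA_add_smul_matB_add_smul_matC (x y z : R) :
    (x • matA R + y • matB R + z • matC R) ^ 2 =
      (y * z - z * y) • matA R + (z * x - x * z) • matB R + (x * y - y * x) • matC R
        - (x * x + y * y + z * z) • 1 := by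
  have hA (a b : R) (Q : Matrix (Fin 4) (Fin 4) R) : a • matA R * b • Q = (a * b) • (matA R * Q) :=
    Matrix.smul_mul_smul_of_commute a b _ Q (matA_apply_commute b)
  have hB (a b : R) (Q : Matrix (Fin 4) (Fin 4) R) : a • matB R * b • Q = (a * b) • (matB R * Q) :=
    Matrix.smul_mul_smul_of_commute a b _ Q (matB_apply_commute b)
  have hC (a b : R) (Q : Matrix (Fin 4) (Fin 4) R) : a • matC R * b • Q = (a * b) • (matC R * Q) :=
    Matrix.smul_mul_smul_of_commute a b _ Q (matC_apply_commute b)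
  simp only [sq, add_mul, mul_add, hA, hB, hC, matA_mul_matA, matA_mul_matB, matA_mul_matC,
    matB_mul_matA, matB_mul_matB, matB_mul_matC, matC_mul_matA, matC_mul_matB, matC_mul_matC,
    smul_neg, sub_smul, add_smul]
  abel

end QuaternionRelations

/-- if `x, y, z ∈ R` satisfy the `su(2)_h` relations (`h = 2iħ`, here `ħ = hb`),
then `M = xA + yB + zC` satisfies the Cayley–Hamilton identity
`M² − 2iħM + (x² + y² + z²)I = 0`. -/
theorem CayleyHamilton_for_M
    {R : Type*} [Ring R] [Algebra ℂ R] (hb : ℂ) (x y z : R)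
    (hxy : x * y - y * x = (2 * Complex.I * hb) • z)
    (hyz : y * z - z * y = (2 * Complex.I * hb) • x)
    (hzx : z * x - x * z = (2 * Complex.I * hb) • y) :
    let M : Matrix (Fin 4) (Fin 4) R := x • matA R + y • matB R + z • matC R
    M ^ 2 - (2 * Complex.I * hb) • M
      + (x * x + y * y + z * z) • (1 : Matrix (Fin 4) (Fin 4) R) = 0 := by
  intro M
  rw [sq_smul_matA_add_smul_matB_add_smul_matC, hxy, hyz, hzx]
  simp only [M, smul_assoc, smul_add]
  abel
end

section
/- Let R be an associative unital ℂ-algebra containing elements x, y, z satisfying xy − yx = 2iħz, yz − zy = 2iħx, zx − xz = 2iħy (ħ ∈ ℂ), and a central invertible element μ commuting with x, y, z such that μ² = −4(x² + y² + z² + ħ²). Let M = xA + yB + zC with A, B, C the 4×4 matrices A = [[0,1,0,0],[−1,0,0,0],[0,0,0,−1],[0,0,1,0]], B = [[0,0,1,0],[0,0,0,1],[−1,0,0,0],[0,−1,0,0]], C = [[0,0,0,1],[0,0,−1,0],[0,1,0,0],[−1,0,0,0]], and T(μ) := μ⁻¹(μ² − 4ħ²)·I − 4iħμ⁻¹·M.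 Then for every natural number p: T(μ)^p = (2μ)⁻¹((μ + 2iħ)^{p+1} + (μ − 2iħ)^{p+1})·I + μ⁻¹((μ − 2iħ)^p − (μ + 2iħ)^p)·M. -/
/-!
The matrices `A`, `B`, `C` represent the quaternion units, so `M = x A + y B + z C` squares to
`-(x² + y² + z²) + 2iħ M` under the `su(2)` relations. With `c = 2iħ` this says
`(2M - c)² = μ²`, so `J = μ⁻¹ (2M - c)` is an involution, and `T(μ) = μ - c J`.
For an involution `J` commuting with `a` and `b`,
`2 (a + b J)^p = (a + b)^p (1 + J) + (a - b)^p (1 - J)`, which gives the formula after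
expanding `J`. Since `M`, `μ`, `μ⁻¹` and `c` commute pairwise, all
remaining computations take place in the commutative subring they generate.
-/

theorem two_mul_pow_add_mul_of_mul_self_eq_one {S : Type*} [Ring S] {J a b : S}
    (hJ : J * J = 1) (ha : Commute J a) (hb : Commute J b) (p : ℕ) :
    2 * (a + b * J) ^ p = (a + b) ^ p * (1 + J) + (a - b) ^ p * (1 - J) := by
  induction p with
  | zero => simp only [pow_zero, one_mul]; noncomm_ring
  | succ p ih =>
    have hJb : J * (b * J) = b := by rw [← mul_assoc, hb.eq, mul_assoc, hJ, mul_one]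
    have h_add : (1 + J) * (a + b * J) = (a + b) * (1 + J) := by
      rw [add_mul, mul_add, mul_add, hJb, ha.eq]; noncomm_ring
    have h_sub : (1 - J) * (a + b * J) = (a - b) * (1 - J) := by
      rw [sub_mul, mul_add, mul_add, hJb, ha.eq]; noncomm_ring
    calc 2 * (a + b * J) ^ (p + 1) = 2 * (a + b * J) ^ p * (a + b * J) := by
          rw [pow_succ, mul_assoc]
      _ = (a + b) ^ p * ((1 + J) * (a + b * J)) + (a - b) ^ p * ((1 - J) * (a + b * J)) := by
          rw [ih, add_mul, mul_assoc, mul_assoc]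
      _ = (a + b) ^ (p + 1) * (1 + J) + (a - b) ^ (p + 1) * (1 - J) := by
          rw [h_add, h_sub, ← mul_assoc, ← mul_assoc, ← pow_succ, ← pow_succ]

theorem two_mul_pow_eq_of_sq_eq {K : Type*} [CommRing K] {m μ ν c : K} (hμν : μ * ν = 1)
    (hsq : (2 * m - c) ^ 2 = μ ^ 2) (p : ℕ) :
    2 * (ν * (μ ^ 2 + c ^ 2) - 2 * c * ν * m) ^ p
      = ν * ((μ + c) ^ (p + 1) + (μ - c) ^ (p + 1)) + 2 * ν * ((μ - c) ^ p - (μ + c) ^ p) * m := by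
  set J := ν * (2 * m - c)
  have hJ : J * J = 1 := by linear_combination ν ^ 2 * hsq + (μ * ν + 1) * hμν
  have hT : ν * (μ ^ 2 + c ^ 2) - 2 * c * ν * m = μ + -c * J := by linear_combination μ * hμν
  rw [hT, two_mul_pow_add_mul_of_mul_self_eq_one hJ (Commute.all _ _) (Commute.all _ _),
    pow_succ, pow_succ]
  linear_combination -((μ - c) ^ p + (μ + c) ^ p) * hμν

open scoped IsMulCommutative in
theorem two_mul_pow_eq_of_sq_eq_of_pairwise_commute {S : Type*} [Ring S] {m μ ν c : S}
    (hcomm : ({m, μ, ν, c} : Set S).Pairwise Commute) (hμν : μ * ν = 1)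
    (hsq : (2 * m - c) ^ 2 = μ ^ 2) (p : ℕ) :
    2 * (ν * (μ ^ 2 + c ^ 2) - 2 * c * ν * m) ^ p
      = ν * ((μ + c) ^ (p + 1) + (μ - c) ^ (p + 1)) + 2 * ν * ((μ - c) ^ p - (μ + c) ^ p) * m := by
  let K := Subring.closure ({m, μ, ν, c} : Set S)
  have : IsMulCommutative K := Subring.isMulCommutative_closure fun x hx y hy => by
    rcases eq_or_ne x y with rfl | hne
    · rfl
    · exact hcomm hx hy hne
  have mem : ∀ {s}, s ∈ ({m, μ, ν, c} : Set S) → s ∈ K := fun hs => Subring.subset_closure hs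
  have hK := two_mul_pow_eq_of_sq_eq (K := K) (m := ⟨m, mem (by simp)⟩) (μ := ⟨μ, mem (by simp)⟩)
    (ν := ⟨ν, mem (by simp)⟩) (c := ⟨c, mem (by simp)⟩) (Subtype.ext hμν) (Subtype.ext hsq) p
  exact congrArg Subtype.val hK

section Quaternion

variable {R : Type*} [Ring R]

def quaternionMatrix (x y z : R) : Matrix (Fin 4) (Fin 4) R :=
  x • matA R + y • matB R + z • matC R

theorem quaternionMatrix_mul_self (x y z : R) :
    quaternionMatrix x y z * quaternionMatrix x y z
      = (-(x * x + y * y + z * z)) • 1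
        + quaternionMatrix (y * z - z * y) (z * x - x * z) (x * y - y * x) := by
  ext i j
  fin_cases i <;> fin_cases j <;>
    simp [quaternionMatrix, matA, matB, matC, Matrix.mul_apply, Fin.sum_univ_four] <;> abel

theorem quaternionMatrix_mul_self_of_commutators {x y z c : R} (hxy : x * y - y * x = c * z)
    (hyz : y * z - z * y = c * x) (hzx : z * x - x * z = c * y) :
    quaternionMatrix x y z * quaternionMatrix x y z
      = (-(x * x + y * y + z * z)) • 1 + c • quaternionMatrix x y z := by
  rw [quaternionMatrix_mul_self, hxy, hyz, hzx, quaternionMatrix, quaternionMatrix]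
  simp only [smul_add, mul_smul]

theorem two_mul_quaternionMatrix_sub_sq {x y z c : R} (hc : ∀ r, Commute c r)
    (hxy : x * y - y * x = c * z) (hyz : y * z - z * y = c * x) (hzx : z * x - x * z = c * y) :
    (2 * quaternionMatrix x y z - Matrix.scalar (Fin 4) c) ^ 2
      = Matrix.scalar (Fin 4) (c ^ 2 - 4 * (x * x + y * y + z * z)) := by
  set Q := quaternionMatrix x y z
  set C := Matrix.scalar (Fin 4) c
  have hQC : Q * C = C * Q := (Matrix.scalar_commute c hc Q).eq.symm
  have hQ : Q * Q = Matrix.scalar (Fin 4) (-(x * x + y * y + z * z)) + C * Q := by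
    rw [quaternionMatrix_mul_self_of_commutators hxy hyz hzx]
    simp only [Matrix.smul_eq_diagonal_mul, Matrix.scalar_apply, mul_one, C, Q]
  calc (2 * Q - C) ^ 2 = 4 * (Q * Q) - 2 * (Q * C) - 2 * (C * Q) + C * C := by noncomm_ring
    _ = Matrix.scalar (Fin 4) (c ^ 2 - 4 * (x * x + y * y + z * z)) := by
        rw [hQC, hQ]
        simp only [map_sub, map_mul, map_pow, map_neg, map_ofNat, C]
        noncomm_ring

theorem two_mul_pow_quaternionMatrix {x y z μ ν c : R}
    (hμ : ∀ r, Commute μ r) (hν : ∀ r, Commute ν r) (hc : ∀ r, Commute c r) (hμν : μ * ν = 1)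
    (hxy : x * y - y * x = c * z) (hyz : y * z - z * y = c * x) (hzx : z * x - x * z = c * y)
    (hμsq : μ ^ 2 = c ^ 2 - 4 * (x * x + y * y + z * z)) (p : ℕ) :
    2 * ((ν * (μ ^ 2 + c ^ 2)) • 1 - (2 * c * ν) • quaternionMatrix x y z) ^ p
      = (ν * ((μ + c) ^ (p + 1) + (μ - c) ^ (p + 1))) • 1
        + (2 * ν * ((μ - c) ^ p - (μ + c) ^ p)) • quaternionMatrix x y z := by
  have smul_eq (r : R) (N : Matrix (Fin 4) (Fin 4) R) : r • N = Matrix.scalar (Fin 4) r * N := by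
    simp [Matrix.smul_eq_diagonal_mul]
  simp only [smul_eq, mul_one, map_mul, map_add, map_sub, map_pow, map_ofNat]
  refine two_mul_pow_eq_of_sq_eq_of_pairwise_commute ?_ (by rw [← map_mul, hμν, map_one])
    (by rw [two_mul_quaternionMatrix_sub_sq hc hxy hyz hzx, ← hμsq, map_pow]) p
  rintro a ha b hb -
  simp only [Set.mem_insert_iff, Set.mem_singleton_iff] at ha hb
  rcases ha with rfl | rfl | rfl | rfl
  · rcases hb with rfl | rfl | rfl | rfl
    exacts [.refl _, (Matrix.scalar_commute μ hμ _).symm, (Matrix.scalar_commute ν hν _).symm,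
      (Matrix.scalar_commute c hc _).symm]
  exacts [Matrix.scalar_commute μ hμ b, Matrix.scalar_commute ν hν b, Matrix.scalar_commute c hc b]

end Quaternion

theorem one_div_two_smul_two_mul {𝕜 A : Type*} [Field 𝕜] [NeZero (2 : 𝕜)] [Ring A] [Module 𝕜 A]
    (a : A) : ((1 : 𝕜) / 2) • (2 * a) = a := by
  rw [two_mul, ← two_smul 𝕜 a, smul_smul, one_div, inv_mul_cancel₀ two_ne_zero, one_smul]

/-- with `x, y, z` satisfying the `su(2)_h` relations (`ħ = hb`) and `μ` a
central invertible element with `μ² = −4(x² + y² + z² + ħ²)`, for every natural `p`,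
`T(μ)^p = (2μ)⁻¹((μ + 2iħ)^{p+1} + (μ − 2iħ)^{p+1})I + μ⁻¹((μ − 2iħ)^p − (μ + 2iħ)^p)M`,
where `T(μ) = μ⁻¹(μ² − 4ħ²)I − 4iħμ⁻¹M` and `M = xA + yB + zC`. -/
theorem T_mu_powers
    {R : Type*} [Ring R] [Algebra ℂ R] (hb : ℂ) (x y z μ μinv : R)
    (hxy : x * y - y * x = (2 * Complex.I * hb) • z)
    (hyz : y * z - z * y = (2 * Complex.I * hb) • x)
    (hzx : z * x - x * z = (2 * Complex.I * hb) • y)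
    (hcentral : ∀ r : R, μ * r = r * μ)
    (hinv₁ : μ * μinv = 1) (hinv₂ : μinv * μ = 1)
    (hμsq : μ * μ = (-4 : ℂ) • (x * x + y * y + z * z + (hb ^ 2) • (1 : R))) :
    let c : R := (2 * Complex.I * hb) • (1 : R)
    let M : Matrix (Fin 4) (Fin 4) R := x • matA R + y • matB R + z • matC R
    let Tμ : Matrix (Fin 4) (Fin 4) R :=
      (μinv * (μ * μ - (4 * hb ^ 2) • (1 : R))) • (1 : Matrix (Fin 4) (Fin 4) R)
        - (4 * Complex.I * hb) • (μinv • M)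
    ∀ p : ℕ,
      Tμ ^ p =
        ((((1 : ℂ) / 2) • μinv) * ((μ + c) ^ (p + 1) + (μ - c) ^ (p + 1)))
            • (1 : Matrix (Fin 4) (Fin 4) R)
          + (μinv * ((μ - c) ^ p - (μ + c) ^ p)) • M := by
  intro c M Tμ p
  have hc (r : R) : Commute c r := by
    simpa only [Algebra.algebraMap_eq_smul_one] using
      Algebra.commute_algebraMap_left (2 * Complex.I * hb) r
  have hc_mul (r : R) : (2 * Complex.I * hb) • r = c * r := (smul_one_mul _ r).symm
  have hμinv (r : R) : Commute μinv r :=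
    Commute.units_inv_left (u := ⟨μ, μinv, hinv₁, hinv₂⟩) (hcentral r)
  have hc_sq : c ^ 2 = (-(4 * hb ^ 2) : ℂ) • 1 := by
    simp only [c, sq, smul_mul_smul_comm, one_mul]
    congr 1
    linear_combination (4 * hb ^ 2) * Complex.I_mul_I
  have hμ_sq : μ ^ 2 = c ^ 2 - 4 * (x * x + y * y + z * z) := by
    rw [sq, hμsq, hc_sq, ← map_ofNat (algebraMap ℂ R) 4, ← Algebra.smul_def]
    module
  have hT : Tμ = (μinv * (μ ^ 2 + c ^ 2)) • 1 - (2 * c * μinv) • quaternionMatrix x y z := by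
    have two_c : 2 * c = (4 * Complex.I * hb) • 1 := by
      rw [two_mul, ← add_smul]
      ring_nf
    rw [hc_sq, sq μ, neg_smul, ← sub_eq_add_neg, two_c, smul_one_mul, smul_assoc]
    rfl
  rw [hT, show M = quaternionMatrix x y z from rfl, ← one_div_two_smul_two_mul (𝕜 := ℂ) (_ ^ p),
    two_mul_pow_quaternionMatrix hcentral hμinv hc hinv₁ (by rw [← hc_mul, hxy])
      (by rw [← hc_mul, hyz]) (by rw [← hc_mul, hzx]) hμ_sq p,
    smul_add, ← smul_assoc, ← smul_assoc, smul_mul_assoc, mul_assoc 2, one_div_two_smul_two_mul]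
end

section
/- Let R be an associative unital ℂ-algebra containing elements x, y, z satisfying xy − yx = 2iħz, yz − zy = 2iħx, zx − xz = 2iħy (ħ ∈ ℂ), and a central invertible element r̂ (the quantum radius) commuting with x, y, z such that r̂² = x² + y² + z² + ħ². Let M = xA + yB + zC with A, B, C the 4×4 matrices A = [[0,1,0,0],[−1,0,0,0],[0,0,0,−1],[0,0,1,0]], B = [[0,0,1,0],[0,0,0,1],[−1,0,0,0],[0,−1,0,0]], C = [[0,0,0,1],[0,0,−1,0],[0,1,0,0],[−1,0,0,0]]. Then the matrix T(r̂) := r̂⁻¹(r̂² + ħ²)·I + iħr̂⁻¹·M satisfies T(r̂)² = (x·I + iħA)² + (y·I + iħB)² + (z·I + iħC)² + ħ²·I; i.e. T(r̂)² = T(x)² + T(y)² + T(z)² + ħ²I, so the multiplicative map T sends the element x² + y² + z² + ħ² − r̂² to 0 and is well-defined on the central extension 𝒜 = (U(su(2)_h) ⊗ ℂ[t, r̂]) / ⟨x² + y² + z² + ħ² − r̂²⟩. -/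
/-!
`A`, `B`, `C` multiply like the quaternion units `i`, `j`, `k`, and having integer entries they
commute with the scalar matrices `x I`, `y I`, `z I`. Hence the `su(2)_h` relations give
`M² = -Cas + 2iħ M`, and expanding the right-hand side gives `Cas + 4ħ² + 2iħ M`. The matrices
`r̂ I`, `r̂⁻¹ I` and `M` commute pairwise, so `T(r̂)²` is computed in the commutative subalgebra
they generate, where the claim is a polynomial identity modulo `M² = ħ² - r̂² + 2iħ M`.
-/

section

variable {K S : Type*} [CommRing K] [Ring S] [Algebra K S]

theorem add_smul_sq_of_mul_self_eq_neg_one {X u : S} (hXu : Commute X u) (hu : u * u = -1)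
    (c : K) : (X + c • u) ^ 2 = X * X + (2 * c) • (X * u) - c ^ 2 • 1 := by
  simp only [sq, add_mul, mul_add, smul_mul_assoc, mul_smul_comm, hu, hXu.eq]
  module

theorem sq_inv_mul_add_of_sq_eq {A : Type*} [CommRing A] {ρ ρ' M c h : A}
    (hinv : ρ' * ρ = 1) (hc : c ^ 2 = -h) (hM : M ^ 2 = h - ρ ^ 2 + 2 * c * M) :
    (ρ' * (ρ ^ 2 + h) + c * (ρ' * M)) ^ 2 = ρ ^ 2 + 3 * h + 2 * c * M := by
  linear_combination
    ρ' ^ 2 * (M ^ 2 * hc - h * hM) + (ρ' * ρ + 1) * (ρ ^ 2 + 3 * h + 2 * c * M) * hinv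

open scoped IsMulCommutative in
theorem Commute.sq_inv_mul_add_of_sq_eq {c h : K} {ρ ρ' M : S} (hρρ' : Commute ρ ρ')
    (hρM : Commute ρ M) (hρ'M : Commute ρ' M) (hinv : ρ' * ρ = 1) (hc : c ^ 2 = -h)
    (hM : M * M = h • 1 - ρ * ρ + (2 * c) • M) :
    (ρ' * (ρ * ρ + h • 1) + c • (ρ' * M)) ^ 2 = ρ * ρ + (3 * h) • 1 + (2 * c) • M := by
  set B := Algebra.adjoin K {ρ, ρ', M}
  have := Algebra.isMulCommutative_adjoin K (s := {ρ, ρ', M}) (by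
    simp only [Set.mem_insert_iff, Set.mem_singleton_iff]
    rintro a (rfl | rfl | rfl) b (rfl | rfl | rfl)
    exacts [rfl, hρρ', hρM, hρρ'.symm, rfl, hρ'M, hρM.symm, hρ'M.symm, rfl])
  let ρB : B := ⟨ρ, Algebra.subset_adjoin (by simp)⟩
  let ρ'B : B := ⟨ρ', Algebra.subset_adjoin (by simp)⟩
  let MB : B := ⟨M, Algebra.subset_adjoin (by simp)⟩
  have hval : Function.Injective B.val := Subtype.val_injective
  have key := _root_.sq_inv_mul_add_of_sq_eq (ρ := ρB) (ρ' := ρ'B) (M := MB)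
    (c := algebraMap K B c) (h := algebraMap K B h) (Subtype.ext hinv)
    (by rw [← map_pow, hc, map_neg])
    (hval (by
      simpa only [map_pow, map_add, map_sub, map_mul, map_ofNat, AlgHom.commutes, sq,
        Algebra.smul_def, mul_one, Subalgebra.coe_val, ρB, MB] using hM))
  simpa only [map_pow, map_add, map_sub, map_mul, map_ofNat, AlgHom.commutes, Algebra.smul_def,
    mul_one, sq, Subalgebra.coe_val, ρB, ρ'B, MB] using congrArg B.val key

end

namespace QuaternionAlgebra.Basis

variable {L S : Type*} [CommRing L] [Ring S] [Algebra L S] (q : Basis S (-1 : L) 0 (-1))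

theorem i_mul_i_eq_neg_one : q.i * q.i = -1 := by simp [q.i_mul_i]
theorem j_mul_j_eq_neg_one : q.j * q.j = -1 := by simp [q.j_mul_j]
theorem k_mul_k_eq_neg_one : q.k * q.k = -1 := by simp [q.k_mul_k]
theorem j_mul_i_eq_neg_k : q.j * q.i = -q.k := by simp [q.j_mul_i]
theorem i_mul_k_eq_neg_j : q.i * q.k = -q.j := by simp [q.i_mul_k]
theorem k_mul_i_eq_j : q.k * q.i = q.j := by simp [q.k_mul_i]
theorem k_mul_j_eq_neg_i : q.k * q.j = -q.i := by simp [q.k_mul_j]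
theorem j_mul_k_eq_i : q.j * q.k = q.i := by simp [q.j_mul_k]

variable {q}

theorem commute_k {X : S} (hX : Commute q.i X ∧ Commute q.j X) : Commute q.k X :=
  q.i_mul_j ▸ hX.1.mul_left hX.2

theorem mul_i_add_mul_j_add_mul_k_sq {X Y Z : S} (hX : Commute q.i X ∧ Commute q.j X)
    (hY : Commute q.i Y ∧ Commute q.j Y) (hZ : Commute q.i Z ∧ Commute q.j Z) :
    (X * q.i + Y * q.j + Z * q.k) ^ 2 = -(X * X + Y * Y + Z * Z)
      + (Y * Z - Z * Y) * q.i + (Z * X - X * Z) * q.j + (X * Y - Y * X) * q.k := by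
  simp only [sq, add_mul, mul_add, hX.1.mul_mul_mul_comm, hY.1.mul_mul_mul_comm,
    hZ.1.mul_mul_mul_comm, hX.2.mul_mul_mul_comm, hY.2.mul_mul_mul_comm, hZ.2.mul_mul_mul_comm,
    (commute_k hX).mul_mul_mul_comm, (commute_k hY).mul_mul_mul_comm,
    (commute_k hZ).mul_mul_mul_comm, i_mul_i_eq_neg_one, j_mul_j_eq_neg_one, k_mul_k_eq_neg_one,
    q.i_mul_j, j_mul_i_eq_neg_k, i_mul_k_eq_neg_j, k_mul_i_eq_j, j_mul_k_eq_i, k_mul_j_eq_neg_i]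
  noncomm_ring

variable {K : Type*} [CommRing K] [Algebra K S]

theorem mul_i_add_mul_j_add_mul_k_sq_of_su2 {c : K} {X Y Z : S}
    (hX : Commute q.i X ∧ Commute q.j X) (hY : Commute q.i Y ∧ Commute q.j Y)
    (hZ : Commute q.i Z ∧ Commute q.j Z) (hXY : X * Y - Y * X = (2 * c) • Z)
    (hYZ : Y * Z - Z * Y = (2 * c) • X) (hZX : Z * X - X * Z = (2 * c) • Y) :
    (X * q.i + Y * q.j + Z * q.k) ^ 2
      = -(X * X + Y * Y + Z * Z) + (2 * c) • (X * q.i + Y * q.j + Z * q.k) := by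
  rw [mul_i_add_mul_j_add_mul_k_sq hX hY hZ, hXY, hYZ, hZX]
  simp only [smul_mul_assoc, smul_add]
  abel

variable (q) in
theorem sq_radius_eq_sum_sq {c h : K} (hc : c ^ 2 = -h) {X Y Z ρ ρ' : S}
    (hX : Commute q.i X ∧ Commute q.j X) (hY : Commute q.i Y ∧ Commute q.j Y)
    (hZ : Commute q.i Z ∧ Commute q.j Z) (hXY : X * Y - Y * X = (2 * c) • Z)
    (hYZ : Y * Z - Z * Y = (2 * c) • X) (hZX : Z * X - X * Z = (2 * c) • Y)
    (hρ : ∀ s, Commute ρ s) (hρ' : ∀ s, Commute ρ' s) (hinv : ρ' * ρ = 1)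
    (hρsq : ρ * ρ = X * X + Y * Y + Z * Z + h • 1) :
    (ρ' * (ρ * ρ + h • 1) + c • (ρ' * (X * q.i + Y * q.j + Z * q.k))) ^ 2
      = (X + c • q.i) ^ 2 + (Y + c • q.j) ^ 2 + (Z + c • q.k) ^ 2 + h • 1 := by
  have hM := mul_i_add_mul_j_add_mul_k_sq_of_su2 hX hY hZ hXY hYZ hZX
  rw [(hρ ρ').sq_inv_mul_add_of_sq_eq (hρ _) (hρ' _) hinv hc (by rw [← sq, hM, hρsq]; abel),
    add_smul_sq_of_mul_self_eq_neg_one hX.1.symm q.i_mul_i_eq_neg_one,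
    add_smul_sq_of_mul_self_eq_neg_one hY.2.symm q.j_mul_j_eq_neg_one,
    add_smul_sq_of_mul_self_eq_neg_one (commute_k hZ).symm q.k_mul_k_eq_neg_one, hc, hρsq]
  module

end QuaternionAlgebra.Basis

section

variable (R : Type*) [Ring R]

def matQuaternionBasis : QuaternionAlgebra.Basis (Matrix (Fin 4) (Fin 4) R) (-1 : ℤ) 0 (-1) where
  i := matA R
  j := matB R
  k := matC R
  i_mul_i := by
    ext i j; fin_cases i <;> fin_cases j <;> simp [matA, Matrix.mul_apply, Fin.sum_univ_four]
  j_mul_j := by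
    ext i j; fin_cases i <;> fin_cases j <;> simp [matB, Matrix.mul_apply, Fin.sum_univ_four]
  i_mul_j := by
    ext i j; fin_cases i <;> fin_cases j <;>
      simp [matA, matB, matC, Matrix.mul_apply, Fin.sum_univ_four]
  j_mul_i := by
    ext i j; fin_cases i <;> fin_cases j <;>
      simp [matA, matB, matC, Matrix.mul_apply, Fin.sum_univ_four]

variable {R}

theorem commute_matA_scalar (s : R) : Commute (matA R) (Matrix.scalar (Fin 4) s) :=
  (Matrix.scalar_commute_iff.2 (by ext i j; fin_cases i <;> fin_cases j <;> simp [matA])).symm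

theorem commute_matB_scalar (s : R) : Commute (matB R) (Matrix.scalar (Fin 4) s) :=
  (Matrix.scalar_commute_iff.2 (by ext i j; fin_cases i <;> fin_cases j <;> simp [matB])).symm

end

/-- with `x, y, z` satisfying the `su(2)_h` relations (`ħ = hb`) and the
quantum radius `r̂ = r` a central invertible element with `r̂² = x² + y² + z² + ħ²`,
the matrix `T(r̂) = r̂⁻¹(r̂² + ħ²)I + iħr̂⁻¹M` satisfies
`T(r̂)² = T(x)² + T(y)² + T(z)² + ħ²I`; hence `T` sends `x² + y² + z² + ħ² − r̂²` to 0
and is well-defined on the central extension `𝒜`. -/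
theorem T_quantum_radius_consistency
    {R : Type*} [Ring R] [Algebra ℂ R] (hb : ℂ) (x y z r rinv : R)
    (hxy : x * y - y * x = (2 * Complex.I * hb) • z)
    (hyz : y * z - z * y = (2 * Complex.I * hb) • x)
    (hzx : z * x - x * z = (2 * Complex.I * hb) • y)
    (hcentral : ∀ s : R, r * s = s * r)
    (hinv₁ : r * rinv = 1) (hinv₂ : rinv * r = 1)
    (hrsq : r * r = x * x + y * y + z * z + (hb ^ 2) • (1 : R)) :
    let M : Matrix (Fin 4) (Fin 4) R := x • matA R + y • matB R + z • matC R
    let Tr : Matrix (Fin 4) (Fin 4) R :=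
      (rinv * (r * r + (hb ^ 2) • (1 : R))) • (1 : Matrix (Fin 4) (Fin 4) R)
        + (Complex.I * hb) • (rinv • M)
    Tr ^ 2 =
      (x • (1 : Matrix (Fin 4) (Fin 4) R) + (Complex.I * hb) • matA R) ^ 2
        + (y • (1 : Matrix (Fin 4) (Fin 4) R) + (Complex.I * hb) • matB R) ^ 2
        + (z • (1 : Matrix (Fin 4) (Fin 4) R) + (Complex.I * hb) • matC R) ^ 2
        + (hb ^ 2) • (1 : Matrix (Fin 4) (Fin 4) R) := by
  intro M Tr
  let φ : R →ₐ[ℂ] Matrix (Fin 4) (Fin 4) R := Matrix.scalarAlgHom (Fin 4) ℂ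
  have hsmul (s : R) (N : Matrix (Fin 4) (Fin 4) R) : s • N = φ s * N :=
    Matrix.smul_eq_diagonal_mul N s
  have hcomm (s : R) : Commute (matA R) (φ s) ∧ Commute (matB R) (φ s) :=
    ⟨commute_matA_scalar s, commute_matB_scalar s⟩
  have hφ_central {t : R} (ht : ∀ s, Commute t s) (N : Matrix (Fin 4) (Fin 4) R) :
      Commute (φ t) N :=
    Matrix.scalar_commute t ht N
  have hrinv (s : R) : Commute rinv s :=
    Commute.units_inv_left (u := ⟨r, rinv, hinv₁, hinv₂⟩) (hcentral s)
  have key := (matQuaternionBasis R).sq_radius_eq_sum_sq (c := Complex.I * hb) (h := hb ^ 2)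
    (by rw [mul_pow, Complex.I_sq, neg_one_mul]) (hcomm x) (hcomm y) (hcomm z)
    (by rw [← map_mul, ← map_mul, ← map_sub, hxy, map_smul, mul_assoc])
    (by rw [← map_mul, ← map_mul, ← map_sub, hyz, map_smul, mul_assoc])
    (by rw [← map_mul, ← map_mul, ← map_sub, hzx, map_smul, mul_assoc])
    (hφ_central hcentral) (hφ_central hrinv) (by rw [← map_mul, hinv₂, map_one])
    (by rw [← map_mul, hrsq]; simp only [map_add, map_mul, map_smul, map_one])
  simpa only [M, Tr, matQuaternionBasis, hsmul, mul_one, map_mul, map_add, map_smul, map_one,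
    mul_assoc] using key
end

section
/- Let R be an associative unital ℂ-algebra containing elements x, y, z satisfying xy − yx = 2iħz, yz − zy = 2iħx, zx − xz = 2iħy (ħ ∈ ℂ), and a central invertible element r̂ commuting with x, y, z such that r̂² = x² + y² + z² + ħ². Then the 2×2 matrix 𝒟(r̂) := r̂⁻¹·[[r̂² + ħ² − ħz, −ħ(x + iy)],[−ħ(x − iy), r̂² + ħ² + ħz]] over R satisfies the Cayley–Hamilton identity 𝒟(r̂)² − 2r̂·𝒟(r̂) + (r̂² − ħ²)·I = 0, equivalently in factorized form (𝒟(r̂) − (r̂ + ħ)·I)(𝒟(r̂) − (r̂ − ħ)·I) = 0. -/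
/-!
Writing `σ·X = !![z, x + i y; x - i y, -z]`, the `su(2)_h` relations give
`(σ·X - ħ)² = x² + y² + z² + ħ² = r̂²`. Hence `J = r̂⁻¹ (σ·X - ħ)` is an involution commuting with
`r̂`, and `𝒟(r̂) = r̂ - ħ J`, so `(𝒟(r̂) - r̂)² = ħ²`; both identities are expansions of this.
-/

section

variable {K S : Type*} [CommRing K] [Ring S] [Algebra K S]

theorem Commute.mul_self_units_inv_mul_eq_one {u : Sˣ} {C : S} (hu : Commute (u : S) C)
    (hC : C * C = u * u) : (↑u⁻¹ * C) * (↑u⁻¹ * C) = 1 := by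
  calc (↑u⁻¹ * C) * (↑u⁻¹ * C) = ↑u⁻¹ * ↑u⁻¹ * (C * C) := by
        rw [mul_assoc, ← mul_assoc C, hu.units_inv_left.eq.symm]
        simp only [mul_assoc]
    _ = 1 := by simp [hC, ← mul_assoc]

theorem quadratic_eq_zero_of_eq_sub_smul_involution {ρ J D : S} {ħ : K} (hρJ : Commute ρ J)
    (hJ : J * J = 1) (hD : D = ρ - ħ • J) :
    D ^ 2 - (2 : K) • (ρ * D) + (ρ * ρ - ħ ^ 2 • 1) = 0 ∧
      (D - (ρ + ħ • 1)) * (D - (ρ - ħ • 1)) = 0 := by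
  subst hD
  have hJρ := hρJ.eq.symm
  constructor
  · simp only [sq, sub_mul, mul_sub, smul_mul_assoc, mul_smul_comm, hJ, hJρ]
    module
  · simp only [sub_mul, mul_sub, add_mul, smul_mul_assoc, mul_smul_comm, hJ, hJρ, one_mul,
      mul_one]
    module

end

section

variable {R : Type*} [Ring R] [Algebra ℂ R]

def pauliDot (x y z : R) : Matrix (Fin 2) (Fin 2) R :=
  !![z, x + Complex.I • y; x - Complex.I • y, -z]

theorem pauliDot_sub_smul_one_mul_self {ħ : ℂ} {x y z : R}
    (hxy : x * y - y * x = (2 * Complex.I * ħ) • z)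
    (hyz : y * z - z * y = (2 * Complex.I * ħ) • x)
    (hzx : z * x - x * z = (2 * Complex.I * ħ) • y) :
    (pauliDot x y z - ħ • 1) * (pauliDot x y z - ħ • 1) =
      (x * x + y * y + z * z + ħ ^ 2 • 1) • (1 : Matrix (Fin 2) (Fin 2) R) := by
  have hxy' : x * y = y * x + (2 * Complex.I * ħ) • z := by rw [← hxy]; abel
  have hzx' : z * x = x * z + (2 * Complex.I * ħ) • y := by rw [← hzx]; abel
  have hzy : z * y = y * z - (2 * Complex.I * ħ) • x := by rw [← hyz]; abel
  ext i j
  fin_cases i <;> fin_cases j <;>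
    simp [pauliDot, Matrix.mul_apply, mul_sub, sub_mul, mul_add, add_mul, hxy', hzx', hzy] <;>
    match_scalars <;> ring_nf <;> simp [Complex.I_sq]

end

/-- with `x, y, z` satisfying the `su(2)_h` relations (`ħ = hb`) and the
quantum radius `r̂ = r` a central invertible element with `r̂² = x² + y² + z² + ħ²`,
the matrix `𝒟(r̂) = r̂⁻¹[[r̂² + ħ² − ħz, −ħ(x + iy)],[−ħ(x − iy), r̂² + ħ² + ħz]]`
satisfies the Cayley–Hamilton identity `𝒟(r̂)² − 2r̂𝒟(r̂) + (r̂² − ħ²)I = 0`, equivalently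
`(𝒟(r̂) − (r̂ + ħ)I)(𝒟(r̂) − (r̂ − ħ)I) = 0`. -/
theorem CayleyHamilton_for_D_radius
    {R : Type*} [Ring R] [Algebra ℂ R] (hb : ℂ) (x y z r rinv : R)
    (hxy : x * y - y * x = (2 * Complex.I * hb) • z)
    (hyz : y * z - z * y = (2 * Complex.I * hb) • x)
    (hzx : z * x - x * z = (2 * Complex.I * hb) • y)
    (hcentral : ∀ s : R, r * s = s * r)
    (hinv₁ : r * rinv = 1) (hinv₂ : rinv * r = 1)
    (hrsq : r * r = x * x + y * y + z * z + (hb ^ 2) • (1 : R)) :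
    let Dr : Matrix (Fin 2) (Fin 2) R :=
      rinv • !![r * r + (hb ^ 2) • (1 : R) - hb • z, (-hb) • (x + Complex.I • y);
                (-hb) • (x - Complex.I • y), r * r + (hb ^ 2) • (1 : R) + hb • z]
    (Dr ^ 2 - ((2 : ℂ) • r) • Dr
        + (r * r - (hb ^ 2) • (1 : R)) • (1 : Matrix (Fin 2) (Fin 2) R) = 0)
    ∧ (Dr - (r + hb • (1 : R)) • (1 : Matrix (Fin 2) (Fin 2) R))
        * (Dr - (r - hb • (1 : R)) • (1 : Matrix (Fin 2) (Fin 2) R)) = 0 := by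
  intro Dr
  set C := pauliDot x y z - hb • (1 : Matrix (Fin 2) (Fin 2) R)
  let u : (Matrix (Fin 2) (Fin 2) R)ˣ :=
    Units.map (Matrix.scalar (Fin 2) : R →+* Matrix (Fin 2) (Fin 2) R).toMonoidHom
      ⟨r, rinv, hinv₁, hinv₂⟩
  have hu : (u : Matrix (Fin 2) (Fin 2) R) = r • 1 := by
    simp [u, Matrix.smul_one_eq_diagonal]
  have hu_inv : (↑u⁻¹ : Matrix (Fin 2) (Fin 2) R) = rinv • 1 := by
    simp [u, Matrix.smul_one_eq_diagonal]
  have huC : Commute (u : Matrix (Fin 2) (Fin 2) R) C := Matrix.scalar_commute _ hcentral _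
  have hC : C * C = u * u := by
    rw [pauliDot_sub_smul_one_mul_self hxy hyz hzx, ← hrsq, hu, smul_mul_assoc, one_mul,
      smul_smul]
  have hD : Dr = u - hb • ((↑u⁻¹ : Matrix (Fin 2) (Fin 2) R) * C) := by
    rw [hu, hu_inv, smul_mul_assoc, one_mul]
    ext i j
    fin_cases i <;> fin_cases j <;>
      simp [Dr, C, pauliDot, mul_sub, mul_add, ← mul_assoc, hinv₂] <;> module
  clear_value Dr
  obtain ⟨h₁, h₂⟩ := quadratic_eq_zero_of_eq_sub_smul_involution
    ((Commute.refl (u : Matrix (Fin 2) (Fin 2) R)).units_inv_right.mul_right huC)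
    (huC.mul_self_units_inv_mul_eq_one hC) hD
  rw [hu, smul_mul_assoc, one_mul, smul_mul_assoc, one_mul, smul_smul] at h₁
  rw [hu] at h₂
  constructor
  · rw [smul_assoc, sub_smul, smul_one_smul]; exact h₁
  · rw [add_smul, sub_smul, smul_one_smul]; exact h₂
end

section
/- Let R be an associative unital ℂ-algebra containing elements x, y, z satisfying xy − yx = 2iħz, yz − zy = 2iħx, zx − xz = 2iħy (ħ ∈ ℂ), and let α₁, α₂, α₃ ∈ ℂ. Set b = α₁x + α₂y + α₃z, N = [[α₃, α₁ + iα₂],[α₁ − iα₂, −α₃]], M₂ = [[z, x + iy],[x − iy, −z]], and 𝒟(b) = b·I − ħN in the 2×2 matrices over R. Then 𝒟(b) commutes with M₂: (b·I − ħN)·M₂ = M₂·(b·I − ħN). Consequently, if r̂ is a central invertible element commuting with x, y, z with r̂² = x² + y² + z² + ħ², then 𝒟(b) commutes with 𝒟(r̂) = r̂⁻¹((r̂² + ħ²)·I − ħM₂). -/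
/-!
Write `P(u, v, w) = [[w, u + i v], [u - i v, -w]]`, so that `M₂ = P(x, y, z)` and `N = P(α)`.
For `v = (x, y, z)` the `su(2)_ħ` relations give `[b, v] = -2iħ (α × v)` componentwise, while the
multiplication table of the Pauli matrices gives `[N, M₂] = -2i P(α × v)`. Hence `[b I, M₂]` and
`ħ [N, M₂]` are both `-2iħ P(α × v)` and cancel in `[𝒟(b), M₂]`. The matrix `𝒟(r̂)` is built from
`M₂` and the central elements `r̂⁻¹` and `r̂² + ħ²`, so it commutes with `𝒟(b)` as well.
-/

open Complex Matrix

lemma Matrix.commute_smul_right_of_forall_commute {n R : Type*} [Fintype n] [DecidableEq n]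
    [Semiring R] {A B : Matrix n n R} (hAB : Commute A B) {a : R} (ha : ∀ s, Commute a s) :
    Commute A (a • B) := by
  rw [smul_eq_diagonal_mul, ← scalar_apply]
  exact (scalar_commute a ha A).symm.mul_right hAB

section Su2

variable {R : Type*} [Ring R] [Algebra ℂ R]

def pauliMatrix (u v w : R) : Matrix (Fin 2) (Fin 2) R :=
  !![w, u + I • v; u - I • v, -w]

lemma pauliMatrix_smul (c : ℂ) (u v w : R) :
    pauliMatrix (c • u) (c • v) (c • w) = c • pauliMatrix u v w := by
  ext i j
  fin_cases i <;> fin_cases j <;> simp [pauliMatrix, smul_comm c I, smul_add, smul_sub]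

lemma smul_one_mul_pauliMatrix_sub (b u v w : R) :
    (b • 1 : Matrix (Fin 2) (Fin 2) R) * pauliMatrix u v w - pauliMatrix u v w * (b • 1)
      = pauliMatrix (b * u - u * b) (b * v - v * b) (b * w - w * b) := by
  rw [smul_one_eq_diagonal, diagonal_fin_two]
  ext i j
  fin_cases i <;> fin_cases j <;>
    simp [pauliMatrix, mul_sub, sub_mul, mul_add, add_mul, smul_sub] <;> abel

lemma algebraMap_pauliMatrix_mul_sub (α₁ α₂ α₃ : ℂ) (u v w : R) :
    pauliMatrix (algebraMap ℂ R α₁) (algebraMap ℂ R α₂) (algebraMap ℂ R α₃) * pauliMatrix u v w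
      - pauliMatrix u v w * pauliMatrix (algebraMap ℂ R α₁) (algebraMap ℂ R α₂) (algebraMap ℂ R α₃)
      = (-2 * I) • pauliMatrix (α₂ • w - α₃ • v) (α₃ • u - α₁ • w) (α₁ • v - α₂ • u) := by
  ext i j
  fin_cases i <;> fin_cases j <;>
    simp [pauliMatrix, Algebra.algebraMap_eq_smul_one, mul_add, add_mul, mul_sub, sub_mul,
      smul_sub, smul_add, smul_smul] <;>
    match_scalars <;> ring_nf <;> simp only [I_sq] <;> ring

structure IsSu2Triple (ħ : ℂ) (x y z : R) : Prop where
  commutator_xy : x * y - y * x = (2 * I * ħ) • z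
  commutator_yz : y * z - z * y = (2 * I * ħ) • x
  commutator_zx : z * x - x * z = (2 * I * ħ) • y

namespace IsSu2Triple

variable {ħ : ℂ} {x y z : R}

lemma commutator_x (h : IsSu2Triple ħ x y z) (α₁ α₂ α₃ : ℂ) :
    (α₁ • x + α₂ • y + α₃ • z) * x - x * (α₁ • x + α₂ • y + α₃ • z)
      = -(2 * I * ħ) • (α₂ • z - α₃ • y) := by
  simp only [add_mul, mul_add, smul_mul_assoc, mul_smul_comm]
  linear_combination (norm := module) (-α₂) • h.commutator_xy + α₃ • h.commutator_zx

lemma commutator_y (h : IsSu2Triple ħ x y z) (α₁ α₂ α₃ : ℂ) :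
    (α₁ • x + α₂ • y + α₃ • z) * y - y * (α₁ • x + α₂ • y + α₃ • z)
      = -(2 * I * ħ) • (α₃ • x - α₁ • z) := by
  simp only [add_mul, mul_add, smul_mul_assoc, mul_smul_comm]
  linear_combination (norm := module) α₁ • h.commutator_xy - α₃ • h.commutator_yz

lemma commutator_z (h : IsSu2Triple ħ x y z) (α₁ α₂ α₃ : ℂ) :
    (α₁ • x + α₂ • y + α₃ • z) * z - z * (α₁ • x + α₂ • y + α₃ • z)
      = -(2 * I * ħ) • (α₁ • y - α₂ • x) := by
  simp only [add_mul, mul_add, smul_mul_assoc, mul_smul_comm]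
  linear_combination (norm := module) α₂ • h.commutator_yz - α₁ • h.commutator_zx

theorem commute_smul_one_sub_smul_pauliMatrix (h : IsSu2Triple ħ x y z) (α₁ α₂ α₃ : ℂ) :
    Commute ((α₁ • x + α₂ • y + α₃ • z) • 1 -
        ħ • pauliMatrix (algebraMap ℂ R α₁) (algebraMap ℂ R α₂) (algebraMap ℂ R α₃))
      (pauliMatrix x y z) := by
  set b := α₁ • x + α₂ • y + α₃ • z
  set N := pauliMatrix (algebraMap ℂ R α₁) (algebraMap ℂ R α₂) (algebraMap ℂ R α₃)
  set M := pauliMatrix x y z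
  rw [Commute, SemiconjBy, ← sub_eq_zero]
  calc (b • 1 - ħ • N) * M - M * (b • 1 - ħ • N)
      = ((b • 1) * M - M * (b • 1)) - ħ • (N * M - M * N) := by
        simp only [sub_mul, mul_sub, smul_mul_assoc, mul_smul_comm, smul_sub]; abel
    _ = 0 := by
        rw [smul_one_mul_pauliMatrix_sub, h.commutator_x, h.commutator_y, h.commutator_z,
          pauliMatrix_smul, algebraMap_pauliMatrix_mul_sub]
        module

end IsSu2Triple

end Su2

/-- with `x, y, z` satisfying the `su(2)_h` relations (`ħ = hb`),
`b = α₁x + α₂y + α₃z`, `N = [[α₃, α₁ + iα₂],[α₁ − iα₂, −α₃]]` and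
`M₂ = [[z, x + iy],[x − iy, −z]]`, the matrix `𝒟(b) = bI − ħN` commutes with `M₂`;
consequently, for a central invertible quantum radius `r̂ = r` with
`r̂² = x² + y² + z² + ħ²`, `𝒟(b)` commutes with `𝒟(r̂) = r̂⁻¹((r̂² + ħ²)I − ħM₂)`. -/
theorem D_b_commutes_with_D_radius
    {R : Type*} [Ring R] [Algebra ℂ R] (hb : ℂ) (α₁ α₂ α₃ : ℂ) (x y z : R)
    (hxy : x * y - y * x = (2 * Complex.I * hb) • z)
    (hyz : y * z - z * y = (2 * Complex.I * hb) • x)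
    (hzx : z * x - x * z = (2 * Complex.I * hb) • y) :
    let b : R := α₁ • x + α₂ • y + α₃ • z
    let Nmat : Matrix (Fin 2) (Fin 2) R :=
      !![algebraMap ℂ R α₃, algebraMap ℂ R (α₁ + Complex.I * α₂);
         algebraMap ℂ R (α₁ - Complex.I * α₂), algebraMap ℂ R (-α₃)]
    let M₂ : Matrix (Fin 2) (Fin 2) R :=
      !![z, x + Complex.I • y; x - Complex.I • y, -z]
    let Db : Matrix (Fin 2) (Fin 2) R := b • (1 : Matrix (Fin 2) (Fin 2) R) - hb • Nmat
    Db * M₂ = M₂ * Db ∧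
    ∀ r rinv : R, (∀ s : R, r * s = s * r) → r * rinv = 1 → rinv * r = 1 →
      r * r = x * x + y * y + z * z + (hb ^ 2) • (1 : R) →
      Db * (rinv • ((r * r + (hb ^ 2) • (1 : R)) • (1 : Matrix (Fin 2) (Fin 2) R) - hb • M₂))
        = (rinv • ((r * r + (hb ^ 2) • (1 : R)) • (1 : Matrix (Fin 2) (Fin 2) R) - hb • M₂)) * Db := by
  intro b Nmat M₂ Db
  have hN : Nmat = pauliMatrix (algebraMap ℂ R α₁) (algebraMap ℂ R α₂) (algebraMap ℂ R α₃) := by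
    ext i j
    fin_cases i <;> fin_cases j <;> simp [Nmat, pauliMatrix, Algebra.smul_def]
  have hDbM : Commute Db M₂ := by
    have := IsSu2Triple.commute_smul_one_sub_smul_pauliMatrix ⟨hxy, hyz, hzx⟩ α₁ α₂ α₃
    rwa [← hN] at this
  refine ⟨hDbM, fun r rinv hr hr_rinv hrinv_r _ => ?_⟩
  have hrinv : ∀ s, Commute rinv s := fun s =>
    (Commute.units_inv_right (u := ⟨r, rinv, hr_rinv, hrinv_r⟩) (hr s).symm).symm
  have hS : ∀ s, Commute (r * r + hb ^ 2 • (1 : R)) s := fun s =>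
    (Commute.mul_left (hr s) (hr s)).add_left ((Commute.one_left s).smul_left _)
  exact commute_smul_right_of_forall_commute
    ((commute_smul_right_of_forall_commute (Commute.one_right Db) hS).sub_right
      (hDbM.smul_right hb)) hrinv
end

section
/- Let R be an associative unital ring containing a central element ħ, elements X, Y with XY = YX, and central elements ρ, β such that: X² = 2ρX − (ρ² − ħ²), Y² = 2βY − (β² − ħ²), and both ρ − β and (ρ − β)² − 4ħ² are invertible. Set d = (ρ − β)((ρ − β)² − 4ħ²) and a₀ = 2(ρ² + β² − 3βρ − ħ²)d⁻¹, a₁ = (3β − ρ)d⁻¹, a₂ = (3ρ − β)d⁻¹, a₃ = −2d⁻¹. Then (X − Y)(a₀ + a₁X + a₂Y + a₃XY) = 1 = (a₀ + a₁X + a₂Y + a₃XY)(X − Y); i.e. X − Y is invertible with inverse a₀ + a₁X + a₂Y + a₃XY. -/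
/-!
Since `X` and `Y` commute, the double centralizer of `{X, Y}` is a commutative subring. It contains
`X`, `Y`, every central element, and hence also the inverses `u`, `v` of the central elements
`ρ - β` and `(ρ - β)² - 4ħ²` (a one-sided inverse of a central element is central). In that
commutative ring the claim is an identity modulo the two quadratic relations and the defining
relations of `u` and `v`, checked by `linear_combination`.
-/

open scoped IsMulCommutative

namespace Subring

theorem mem_center_of_mul_eq_one {R : Type*} [Ring R] {c u : R} (hc : c ∈ center R)
    (h : c * u = 1) : u ∈ center R := by
  have hu : u * c = 1 := (mem_center_iff.1 hc u).trans h
  refine mem_center_iff.2 fun r => ?_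
  calc r * u = u * c * r * u := by rw [hu, one_mul]
    _ = u * (r * c) * u := by rw [mul_assoc u, ← mem_center_iff.1 hc r]
    _ = u * r := by rw [mul_assoc, mul_assoc, h, mul_one]

theorem isMulCommutative_centralizer_centralizer {R : Type*} [Ring R] {s : Set R}
    (hcomm : ∀ x ∈ s, ∀ y ∈ s, x * y = y * x) :
    IsMulCommutative (centralizer (Set.centralizer s)) :=
  .of_setLike_mul_comm (Set.centralizer_centralizer_comm_of_comm hcomm)

end Subring

section InverseFormula

variable {R : Type*} [Ring R]

def invSubOfQuadratic (hb X Y ρ β dinv : R) : R :=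
  2 * (ρ ^ 2 + β ^ 2 - 3 * (β * ρ) - hb ^ 2) * dinv + (3 * β - ρ) * dinv * X
    + (3 * ρ - β) * dinv * Y + -2 * dinv * (X * Y)

theorem map_invSubOfQuadratic {S : Type*} [Ring S] (f : R →+* S) (hb X Y ρ β dinv : R) :
    f (invSubOfQuadratic hb X Y ρ β dinv)
      = invSubOfQuadratic (f hb) (f X) (f Y) (f ρ) (f β) (f dinv) := by
  simp [invSubOfQuadratic, map_ofNat]

theorem sub_mul_invSubOfQuadratic_of_comm {A : Type*} [CommRing A] {hb X Y ρ β u v : A}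
    (hX : X * X = 2 * (ρ * X) - (ρ ^ 2 - hb ^ 2)) (hY : Y * Y = 2 * (β * Y) - (β ^ 2 - hb ^ 2))
    (hu : (ρ - β) * u = 1) (hv : ((ρ - β) ^ 2 - 4 * hb ^ 2) * v = 1) :
    (X - Y) * invSubOfQuadratic hb X Y ρ β (u * v) = 1 := by
  unfold invSubOfQuadratic
  linear_combination ((3 * β - ρ - 2 * Y) * (u * v)) * hX - ((3 * ρ - β - 2 * X) * (u * v)) * hY
    + (((ρ - β) ^ 2 - 4 * hb ^ 2) * v) * hu + hv

theorem sub_mul_invSubOfQuadratic {hb X Y ρ β u v : R} (hXY : X * Y = Y * X)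
    (hhb : hb ∈ Subring.center R) (hρ : ρ ∈ Subring.center R) (hβ : β ∈ Subring.center R)
    (hX : X * X = 2 * (ρ * X) - (ρ ^ 2 - hb ^ 2)) (hY : Y * Y = 2 * (β * Y) - (β ^ 2 - hb ^ 2))
    (hu : (ρ - β) * u = 1) (hv : ((ρ - β) ^ 2 - 4 * hb ^ 2) * v = 1) :
    (X - Y) * invSubOfQuadratic hb X Y ρ β (u * v) = 1 ∧
      invSubOfQuadratic hb X Y ρ β (u * v) * (X - Y) = 1 := by
  have hdiff : ρ - β ∈ Subring.center R := sub_mem hρ hβ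
  have hdisc : (ρ - β) ^ 2 - 4 * hb ^ 2 ∈ Subring.center R :=
    sub_mem (pow_mem hdiff 2) (mul_mem (ofNat_mem _ 4) (pow_mem hhb 2))
  set T := Subring.centralizer (Set.centralizer {X, Y})
  have : IsMulCommutative T := Subring.isMulCommutative_centralizer_centralizer (by simp [hXY])
  have central_mem {z : R} (hz : z ∈ Subring.center R) : z ∈ T :=
    Subring.center_le_centralizer _ hz
  have gen_mem {z : R} (hz : z ∈ ({X, Y} : Set R)) : z ∈ T :=
    Set.subset_centralizer_centralizer hz
  have key := sub_mul_invSubOfQuadratic_of_comm (A := T) (hb := ⟨hb, central_mem hhb⟩)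
    (X := ⟨X, gen_mem (by simp)⟩) (Y := ⟨Y, gen_mem (by simp)⟩)
    (ρ := ⟨ρ, central_mem hρ⟩) (β := ⟨β, central_mem hβ⟩)
    (u := ⟨u, central_mem (Subring.mem_center_of_mul_eq_one hdiff hu)⟩)
    (v := ⟨v, central_mem (Subring.mem_center_of_mul_eq_one hdisc hv)⟩)
    (Subtype.ext hX) (Subtype.ext hY) (Subtype.ext hu) (Subtype.ext hv)
  have key' := mul_comm (_ : T) _ ▸ key
  replace key := congrArg T.subtype key
  replace key' := congrArg T.subtype key'
  rw [map_mul, map_sub, map_one, map_invSubOfQuadratic] at key key'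
  exact ⟨key, key'⟩

end InverseFormula

theorem inverse_of_X_sub_Y_general
    {R : Type*} [Ring R] (hb X Y ρ β u v : R)
    (hhb : ∀ r : R, hb * r = r * hb)
    (hXY : X * Y = Y * X)
    (hρ : ∀ r : R, ρ * r = r * ρ)
    (hβ : ∀ r : R, β * r = r * β)
    (hX : X * X = 2 * (ρ * X) - (ρ ^ 2 - hb ^ 2))
    (hY : Y * Y = 2 * (β * Y) - (β ^ 2 - hb ^ 2))
    (hu₁ : (ρ - β) * u = 1)
    (hv₁ : ((ρ - β) ^ 2 - 4 * hb ^ 2) * v = 1) :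
    let dinv : R := u * v
    let a₀ : R := 2 * (ρ ^ 2 + β ^ 2 - 3 * (β * ρ) - hb ^ 2) * dinv
    let a₁ : R := (3 * β - ρ) * dinv
    let a₂ : R := (3 * ρ - β) * dinv
    let a₃ : R := -2 * dinv
    (X - Y) * (a₀ + a₁ * X + a₂ * Y + a₃ * (X * Y)) = 1 ∧
    (a₀ + a₁ * X + a₂ * Y + a₃ * (X * Y)) * (X - Y) = 1 := by
  have mem_center {z : R} (hz : ∀ r : R, z * r = r * z) : z ∈ Subring.center R :=
    Subring.mem_center_iff.2 fun r => (hz r).symm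
  exact sub_mul_invSubOfQuadratic hXY (mem_center hhb) (mem_center hρ) (mem_center hβ)
    hX hY hu₁ hv₁

/-- in a unital associative ring `R` with a central element `ħ = hb`,
commuting elements `X, Y` and central elements `ρ, β` with
`X² = 2ρX − (ρ² − ħ²)`, `Y² = 2βY − (β² − ħ²)`, if `ρ − β` and `(ρ − β)² − 4ħ²` are
invertible (with inverses `u`, `v`), then `X − Y` is invertible with inverse
`a₀ + a₁X + a₂Y + a₃XY`, where, with `d⁻¹ = u·v`,
`a₀ = 2(ρ² + β² − 3βρ − ħ²)d⁻¹`, `a₁ = (3β − ρ)d⁻¹`, `a₂ = (3ρ − β)d⁻¹`, `a₃ = −2d⁻¹`. -/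
theorem inverse_of_X_sub_Y
    {R : Type*} [Ring R] (hb X Y ρ β u v : R)
    (hhb : ∀ r : R, hb * r = r * hb)
    (hXY : X * Y = Y * X)
    (hρ : ∀ r : R, ρ * r = r * ρ)
    (hβ : ∀ r : R, β * r = r * β)
    (hX : X * X = 2 * (ρ * X) - (ρ ^ 2 - hb ^ 2))
    (hY : Y * Y = 2 * (β * Y) - (β ^ 2 - hb ^ 2))
    (hu₁ : (ρ - β) * u = 1) (hu₂ : u * (ρ - β) = 1)
    (hv₁ : ((ρ - β) ^ 2 - 4 * hb ^ 2) * v = 1) (hv₂ : v * ((ρ - β) ^ 2 - 4 * hb ^ 2) = 1) :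
    let dinv : R := u * v
    let a₀ : R := 2 * (ρ ^ 2 + β ^ 2 - 3 * (β * ρ) - hb ^ 2) * dinv
    let a₁ : R := (3 * β - ρ) * dinv
    let a₂ : R := (3 * ρ - β) * dinv
    let a₃ : R := -2 * dinv
    (X - Y) * (a₀ + a₁ * X + a₂ * Y + a₃ * (X * Y)) = 1 ∧
    (a₀ + a₁ * X + a₂ * Y + a₃ * (X * Y)) * (X - Y) = 1 :=
  inverse_of_X_sub_Y_general hb X Y ρ β u v hhb hXY hρ hβ hX hY hu₁ hv₁
end
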